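/- arXiv:math/0105080 — 3 statements merged into one kernel-verified Lean document; each statement's English description precedes it below -/
import Mathlib

section
/- Let (V, ω) be a finite-dimensional real symplectic vector space and Q : V → V linear with Q² = 0 and ω(Qu, v) + ω(u, Qv) = 0 for all u, v. Then ω descends to a well-defined nondegenerate bilinear form on the homology ker Q / im Q. -/
/-!
Skew-adjointness makes `ker Q` and `im Q` orthogonal for `ω`, so `ω` descends to the quotient.
For nondegeneracy, identify `V` with its dual through `v ↦ ω v` (a bijection, as `ω` is
nondegenerate and `V` finite-dimensional); under this identification `Q` becomes `-Qᵀ`, so `im Q`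
corresponds to `im Qᵀ`, the annihilator of `ker Q`. Hence a vector of `ker Q` that is
`ω`-orthogonal to `ker Q` lies in `im Q`.
-/

namespace LinearMap

section Quotient

variable {R M P : Type*} [CommRing R] [AddCommGroup M] [Module R M] [AddCommGroup P] [Module R P]

theorem separatingLeft_liftQ₂ {B : M →ₗ[R] M →ₗ[R] P} {N : Submodule R M}
    (hN : N ≤ ker B) (hN' : N ≤ ker B.flip) (hrad : ker B ≤ N) :
    (B.liftQ₂ N N hN hN').SeparatingLeft := by
  intro a ha
  obtain ⟨m, rfl⟩ := Submodule.Quotient.mk_surjective N a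
  refine (Submodule.Quotient.mk_eq_zero N).2 (hrad (ext fun n ↦ ?_))
  exact ha (Submodule.Quotient.mk n)

end Quotient

section SkewAdjoint

variable {K V : Type*} [Field K] [AddCommGroup V] [Module K V] {ω : LinearMap.BilinForm K V}

theorem SeparatingLeft.surjective_of_finiteDimensional [FiniteDimensional K V]
    (hω : ω.SeparatingLeft) :
    Function.Surjective ω :=
  (injective_iff_surjective_of_finrank_eq_finrank Subspace.dual_finrank_eq.symm).1 <|
    ker_eq_bot.1 (separatingLeft_iff_ker_eq_bot.1 hω)

variable {Q : Module.End K V}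

theorem IsSkewAdjoint.apply_eq_zero_of_mem_ker_of_mem_range (hQ : ω.IsSkewAdjoint Q) {u x : V}
    (hu : u ∈ ker Q) (hx : x ∈ range Q) : ω u x = 0 := by
  obtain ⟨w, rfl⟩ := hx
  have := hQ u w
  simp_all

theorem IsSkewAdjoint.apply_eq_zero_of_mem_range_of_mem_ker (hQ : ω.IsSkewAdjoint Q) {x u : V}
    (hx : x ∈ range Q) (hu : u ∈ ker Q) : ω x u = 0 := by
  obtain ⟨w, rfl⟩ := hx
  have := hQ w u
  simp_all

theorem IsSkewAdjoint.mem_range_of_forall_mem_ker [FiniteDimensional K V]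
    (hω : ω.SeparatingLeft) (hQ : ω.IsSkewAdjoint Q) {x : V} (hx : ∀ v ∈ ker Q, ω x v = 0) :
    x ∈ range Q := by
  have hann : ω x ∈ (ker Q).dualAnnihilator := (Submodule.mem_dualAnnihilator _).2 hx
  rw [← range_dualMap_eq_dualAnnihilator_ker] at hann
  obtain ⟨ψ, hψ⟩ := hann
  obtain ⟨z, rfl⟩ := hω.surjective_of_finiteDimensional ψ
  have hxz : x + Q z = 0 := hω _ fun v ↦ by
    have hzv : ω (Q z) v = -ω z (Q v) := by simpa using hQ z v
    have hxv : ω z (Q v) = ω x v := LinearMap.congr_fun hψ v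
    rw [map_add, add_apply, hzv, hxv, add_neg_cancel]
  exact ⟨-z, by rw [map_neg, neg_eq_iff_add_eq_zero, add_comm, hxz]⟩

end SkewAdjoint

end LinearMap

open LinearMap

theorem omega_descends_nondeg_on_homology_general
    (V : Type*) [AddCommGroup V] [Module ℝ V] [FiniteDimensional ℝ V]
    (ω : LinearMap.BilinForm ℝ V)
    (hnd : ∀ x : V, (∀ y : V, ω x y = 0) → x = 0)
    (Q : V →ₗ[ℝ] V)
    (hskew : ∀ u v : V, ω (Q u) v + ω u (Q v) = 0) :
    -- the homology is `ker Q / im Q`, where `im Q` is viewed inside `ker Q`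
    ∃ ω' : LinearMap.BilinForm ℝ
        (↥(LinearMap.ker Q) ⧸
          (LinearMap.range Q).comap (LinearMap.ker Q).subtype),
      (∀ u v : LinearMap.ker Q,
        ω' (Submodule.Quotient.mk u) (Submodule.Quotient.mk v) = ω u.1 v.1) ∧
      (∀ a, (∀ b, ω' a b = 0) → a = 0) := by
  have hQ : ω.IsSkewAdjoint Q := fun u v ↦ by
    simpa [eq_neg_iff_add_eq_zero] using hskew u v
  set Z := ker Q
  set B := ω.compl₁₂ Z.subtype Z.subtype
  set J := (range Q).comap Z.subtype
  have hJ : J ≤ ker B := fun x hx ↦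
    LinearMap.ext fun v ↦ hQ.apply_eq_zero_of_mem_range_of_mem_ker hx v.2
  have hJ' : J ≤ ker B.flip := fun x hx ↦
    LinearMap.ext fun u ↦ hQ.apply_eq_zero_of_mem_ker_of_mem_range u.2 hx
  have hrad : ker B ≤ J := fun u hu ↦
    hQ.mem_range_of_forall_mem_ker hnd fun v hv ↦ LinearMap.congr_fun hu ⟨v, hv⟩
  exact ⟨B.liftQ₂ J J hJ hJ', fun _ _ ↦ rfl, separatingLeft_liftQ₂ hJ hJ' hrad⟩

/-- With `(V, ω)` symplectic and `Q` skew-adjoint with `Q² = 0`,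
`ω` descends to a well-defined nondegenerate bilinear form on `ker Q / im Q`. -/
theorem omega_descends_nondeg_on_homology
    (V : Type*) [AddCommGroup V] [Module ℝ V] [FiniteDimensional ℝ V]
    (ω : LinearMap.BilinForm ℝ V) (halt : ∀ v : V, ω v v = 0)
    (hnd : ∀ x : V, (∀ y : V, ω x y = 0) → x = 0)
    (Q : V →ₗ[ℝ] V) (hQ2 : ∀ v, Q (Q v) = 0)
    (hskew : ∀ u v : V, ω (Q u) v + ω u (Q v) = 0) :
    -- the homology is `ker Q / im Q`, where `im Q` is viewed inside `ker Q`
    ∃ ω' : LinearMap.BilinForm ℝ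
        (↥(LinearMap.ker Q) ⧸
          (LinearMap.range Q).comap (LinearMap.ker Q).subtype),
      (∀ u v : LinearMap.ker Q,
        ω' (Submodule.Quotient.mk u) (Submodule.Quotient.mk v) = ω u.1 v.1) ∧
      (∀ a, (∀ b, ω' a b = 0) → a = 0) :=
  omega_descends_nondeg_on_homology_general V ω hnd Q hskew
end

section
/- Let M be a smooth manifold and n ≥ 1. On pairs (v, α) where v is a vector field on M and α is a smooth (n−1)-form on M, define the bracket [(v₁,α₁),(v₂,α₂)] = ([v₁,v₂], L_{v₁}α₂ − ι_{v₂} dα₁), where L is the Lie derivative and ι contraction. Then this bracket satisfies the left Leibniz identity: [a, [b, c]] = [[a, b], c] + [b, [a, c]] for all pairs a, b, c. -/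
/-- A Cartan calculus: a real Lie algebra `V` (vector fields on a smooth
manifold `M`) acting on a module `A` (differential forms on `M`) by
contractions `ι`, together with the exterior derivative `d` satisfying
`d ∘ d = 0` and the Cartan relation `ι_{[v,w]} = [L_v, ι_w]`, where
`L_v = d ∘ ι_v + ι_v ∘ d` is the Lie derivative (Cartan's magic formula). -/
structure CartanCalculus (V : Type*) [LieRing V] [LieAlgebra ℝ V]
    (A : Type*) [AddCommGroup A] [Module ℝ A] where
  d : A →ₗ[ℝ] A
  ι : V → A →ₗ[ℝ] A
  ι_add : ∀ v w : V, ι (v + w) = ι v + ι w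
  ι_smul : ∀ (c : ℝ) (v : V), ι (c • v) = c • ι v
  d_d : ∀ a : A, d (d a) = 0
  ι_ι : ∀ (v : V) (a : A), ι v (ι v a) = 0
  ι_bracket : ∀ (v w : V) (a : A),
    ι ⁅v, w⁆ a =
      (d (ι v (ι w a)) + ι v (d (ι w a))) - ι w (d (ι v a) + ι v (d a))

/-- the bracket `[(v₁,α₁),(v₂,α₂)] = ([v₁,v₂], L_{v₁}α₂ − ι_{v₂} dα₁)`
on pairs (vector field, (n−1)-form) satisfies the left Leibniz identity. -/
theorem dorfman_bracket_leibniz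
    (V : Type*) [LieRing V] [LieAlgebra ℝ V]
    (A : Type*) [AddCommGroup A] [Module ℝ A]
    (C : CartanCalculus V A) :
    -- Lie derivative and the bracket on pairs
    ∀ (L : V → A →ₗ[ℝ] A), (∀ (v : V) (a : A), L v a = C.d (C.ι v a) + C.ι v (C.d a)) →
    ∀ (br : V × A → V × A → V × A),
      (∀ p q : V × A, br p q = (⁅p.1, q.1⁆, L p.1 q.2 - C.ι q.1 (C.d p.2))) →
      ∀ a b c : V × A, br a (br b c) = br (br a b) c + br b (br a c) := by
  intro L hL br hbr a b c
  simp only [hbr, hL, Prod.mk_add_mk, Prod.mk.injEq]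
  constructor
  · exact leibniz_lie _ _ _
  · simp only [C.ι_bracket, map_add, map_sub, C.d_d, map_zero, add_zero, sub_zero]
    abel
end

section
/- Let G be a Lie group embedded as a closed subgroup of GL(n,ℝ), with Lie algebra 𝔤 carrying an Ad-invariant symmetric bilinear form ⟨·,·⟩. Let θ_l = g⁻¹ dg and θ_r = dg g⁻¹ denote the left and right Maurer–Cartan forms, and let η be the bi-invariant 3-form on G with η(u,v,w) = ⟨u,[v,w]⟩ at the identity. Then for any smooth manifold M and smooth maps f₁, f₂ : M → G, writing f = f₁ f₂ (pointwise product), one has f*η = f₁*η + f₂*η + d⟨f₁*θ_l ∧ f₂*θ_r⟩, where ⟨· ∧ ·⟩ denotes the 2-form obtained by combining the wedge product with the pairing ⟨·,·⟩. -/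
attribute [local instance] Matrix.normedAddCommGroup Matrix.normedSpace

section
variable {n : ℕ} {E : Type*} [NormedAddCommGroup E] [NormedSpace ℝ E]

/-- The pullback `f*θ_l` of the left Maurer–Cartan form `θ_l = g⁻¹ dg`:
at `x` in direction `u` it is `f(x)⁻¹ · (df)_x(u)`. -/
noncomputable def pullbackThetaL (f : E → Matrix (Fin n) (Fin n) ℝ) (x u : E) :
    Matrix (Fin n) (Fin n) ℝ :=
  (f x)⁻¹ * fderiv ℝ f x u

/-- The pullback `f*θ_r` of the right Maurer–Cartan form `θ_r = dg g⁻¹`. -/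
noncomputable def pullbackThetaR (f : E → Matrix (Fin n) (Fin n) ℝ) (x u : E) :
    Matrix (Fin n) (Fin n) ℝ :=
  fderiv ℝ f x u * (f x)⁻¹

/-- The 2-form `⟨f₁*θ_l ∧ f₂*θ_r⟩` combining the wedge product with the
pairing `B` (with the antisymmetrization convention
`⟨α ∧ β⟩(u,v) = ⟨α(v), β(u)⟩ − ⟨α(u), β(v)⟩`). -/
noncomputable def wedgePairing
    (B : Matrix (Fin n) (Fin n) ℝ →ₗ[ℝ] Matrix (Fin n) (Fin n) ℝ →ₗ[ℝ] ℝ)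
    (f₁ f₂ : E → Matrix (Fin n) (Fin n) ℝ) (x u v : E) : ℝ :=
  B (pullbackThetaL f₁ x v) (pullbackThetaR f₂ x u) -
    B (pullbackThetaL f₁ x u) (pullbackThetaR f₂ x v)

/-- The pullback `f*η` of the bi-invariant Cartan 3-form
`η(u,v,w) = ⟨u, [v,w]⟩` along `f`, evaluated at `x` on directions `u v w`:
`⟨(f*θ_l)(u), [(f*θ_l)(v), (f*θ_l)(w)]⟩`. -/
noncomputable def pullbackEta
    (B : Matrix (Fin n) (Fin n) ℝ →ₗ[ℝ] Matrix (Fin n) (Fin n) ℝ →ₗ[ℝ] ℝ)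
    (f : E → Matrix (Fin n) (Fin n) ℝ) (x u v w : E) : ℝ :=
  B (pullbackThetaL f x u)
    (pullbackThetaL f x v * pullbackThetaL f x w -
      pullbackThetaL f x w * pullbackThetaL f x v)

local notation "M" => Matrix (Fin n) (Fin n) ℝ

/-- The topology on matrices coming from the normed structure. -/
@[reducible] noncomputable def matTopNormed : TopologicalSpace M :=
  @UniformSpace.toTopologicalSpace _ (@PseudoMetricSpace.toUniformSpace _
    (@SeminormedAddCommGroup.toPseudoMetricSpace _
      (@NormedAddCommGroup.toSeminormedAddCommGroup _ Matrix.normedAddCommGroup)))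

attribute [local instance] matTopNormed


/-- Multiplication as a continuous bilinear map. -/
noncomputable def mulCLM (n : ℕ) : M →L[ℝ] M →L[ℝ] M :=
  LinearMap.toContinuousLinearMap
    { toFun := fun a => LinearMap.toContinuousLinearMap (LinearMap.mul ℝ M a)
      map_add' := fun a b => by ext m; simp [add_mul]
      map_smul' := fun c a => by ext m; simp [smul_mul_assoc] }

@[simp] lemma mulCLM_apply (a b : M) : mulCLM n a b = a * b := rfl

/-- A bilinear form as a continuous bilinear map. -/
noncomputable def bCLM (B : M →ₗ[ℝ] M →ₗ[ℝ] ℝ) : M →L[ℝ] M →L[ℝ] ℝ :=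
  LinearMap.toContinuousLinearMap
    { toFun := fun a => LinearMap.toContinuousLinearMap (B a)
      map_add' := fun a b => by ext m; simp
      map_smul' := fun c a => by ext m; simp }

@[simp] lemma bCLM_apply (B : M →ₗ[ℝ] M →ₗ[ℝ] ℝ) (a b : M) : bCLM B a b = B a b := rfl

theorem hasFDerivAt_bilin {F : Type*} [NormedAddCommGroup F] [NormedSpace ℝ F]
    (L : M →L[ℝ] M →L[ℝ] F) {f g : E → M} {f' g' : E →L[ℝ] M} {x : E}
    (hf : HasFDerivAt f f' x) (hg : HasFDerivAt g g' x) :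
    HasFDerivAt (fun y => L (f y) (g y))
      ((L.flip (g x)).comp f' + (L (f x)).comp g') x := by
  have h := (L.isBoundedBilinearMap.hasFDerivAt (f x, g x)).comp x (hf.prodMk hg)
  convert h using 1
  · rfl
  ext d
  simp [IsBoundedBilinearMap.deriv_apply]
  abel

theorem HasFDerivAt.matmul {f g : E → M} {f' g' : E →L[ℝ] M} {x : E}
    (hf : HasFDerivAt f f' x) (hg : HasFDerivAt g g' x) :
    HasFDerivAt (fun y => f y * g y)
      (((mulCLM n).flip (g x)).comp f' + (mulCLM n (f x)).comp g') x :=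
  hasFDerivAt_bilin (mulCLM n) hf hg


theorem differentiableAt_det' {f : E → M} {x : E}
    (hf : ∀ i j, DifferentiableAt ℝ (fun y => f y i j) x) :
    DifferentiableAt ℝ (fun y => (f y).det) x := by
  simp only [Matrix.det_apply']
  apply DifferentiableAt.fun_sum
  intro σ _
  apply DifferentiableAt.const_mul
  have h := HasFDerivAt.finset_prod (u := Finset.univ) (𝕜 := ℝ)
    (g := fun i y => f y (σ i) i) (g' := fun i => fderiv ℝ (fun y => f y (σ i) i) x)
    (x := x) (fun i _ => (hf (σ i) i).hasFDerivAt)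
  exact h.differentiableAt

theorem differentiableAt_entry {f : E → M} {x : E} (hf : DifferentiableAt ℝ f x) (i j : Fin n) :
    DifferentiableAt ℝ (fun y => f y i j) x :=
  differentiableAt_pi.1 (differentiableAt_pi.1 hf i) j

theorem differentiableAt_matrix_inv {f : E → M} {x : E}
    (hf : DifferentiableAt ℝ f x) (hdet : (f x).det ≠ 0) :
    DifferentiableAt ℝ (fun y => (f y)⁻¹) x := by
  have h1 : (fun y => (f y)⁻¹) = fun y => ((f y).det)⁻¹ • (f y).adjugate := by
    funext y; rw [Matrix.inv_def, Ring.inverse_eq_inv']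
  rw [h1]
  apply DifferentiableAt.fun_smul
  · exact (differentiableAt_det' (differentiableAt_entry hf)).inv hdet
  · refine differentiableAt_pi.2 ?_
    intro i
    refine differentiableAt_pi.2 ?_
    intro j
    have : (fun y => (f y).adjugate i j)
        = fun y => ((f y).updateRow j (Pi.single i 1)).det := by
      funext y; rw [Matrix.adjugate_apply]
    show DifferentiableAt ℝ (fun y => (f y).adjugate i j) x
    rw [this]
    apply differentiableAt_det'
    intro a b
    simp only [Matrix.updateRow_apply]
    by_cases h : a = j
    · simp [h]
    · simp only [h, if_false]
      exact differentiableAt_entry hf a b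


theorem hasFDerivAt_matrix_inv {f : E → M} {f' : E →L[ℝ] M} {x : E}
    (hf : HasFDerivAt f f' x)
    (hu : ∀ y, IsUnit ((f y).det)) :
    HasFDerivAt (fun y => (f y)⁻¹)
      (-((mulCLM n ((f x)⁻¹)).comp (((mulCLM n).flip ((f x)⁻¹)).comp f'))) x := by
  have hdiff : DifferentiableAt ℝ (fun y => (f y)⁻¹) x :=
    differentiableAt_matrix_inv hf.differentiableAt (hu x).ne_zero
  have Hh : HasFDerivAt (fun y => (f y)⁻¹) (fderiv ℝ (fun y => (f y)⁻¹) x) x :=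
    hdiff.hasFDerivAt
  have hmul := Hh.matmul hf
  have hone : (fun y => (f y)⁻¹ * f y) = fun _ => (1 : M) := by
    funext y; exact Matrix.nonsing_inv_mul _ (hu y)
  rw [hone] at hmul
  have h0 := hmul.unique (hasFDerivAt_const _ _)
  have key : ∀ d : E, fderiv ℝ (fun y => (f y)⁻¹) x d = -((f x)⁻¹ * (f' d * (f x)⁻¹)) := by
    intro d
    have h0d := congrArg (fun L => L d) h0
    simp only [ContinuousLinearMap.add_apply, ContinuousLinearMap.comp_apply,
      ContinuousLinearMap.flip_apply, mulCLM_apply, ContinuousLinearMap.zero_apply] at h0d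
    have h2 := congrArg (fun m => m * (f x)⁻¹) h0d
    simp only [add_mul, zero_mul, mul_assoc] at h2
    rw [Matrix.mul_nonsing_inv _ (hu x), mul_one] at h2
    have h3 := eq_neg_of_add_eq_zero_left h2
    simpa [mul_assoc] using h3
  have heq : fderiv ℝ (fun y => (f y)⁻¹) x
      = -((mulCLM n ((f x)⁻¹)).comp (((mulCLM n).flip ((f x)⁻¹)).comp f')) := by
    ext d
    simp only [ContinuousLinearMap.neg_apply, ContinuousLinearMap.comp_apply,
      ContinuousLinearMap.flip_apply, mulCLM_apply]
    rw [key d]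
  rwa [heq] at Hh

theorem hasFDerivAt_fderiv_apply {f : E → M} (hf : ContDiff ℝ (⊤ : ℕ∞) f) (x v : E) :
    HasFDerivAt (fun y => fderiv ℝ f y v)
      ((ContinuousLinearMap.apply ℝ M v).comp (fderiv ℝ (fderiv ℝ f) x)) x := by
  have h1 : ContDiff ℝ 1 (fderiv ℝ f) := hf.fderiv_right (WithTop.coe_le_coe.2 le_top)
  have h2 : HasFDerivAt (fderiv ℝ f) (fderiv ℝ (fderiv ℝ f) x) x :=
    ((h1.differentiable one_ne_zero) x).hasFDerivAt
  exact ((ContinuousLinearMap.apply ℝ M v).hasFDerivAt).comp x h2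

theorem snd_symm {f : E → M} (hf : ContDiff ℝ (⊤ : ℕ∞) f) (x u v : E) :
    fderiv ℝ (fderiv ℝ f) x u v = fderiv ℝ (fderiv ℝ f) x v u := by
  have h := (hf.contDiffAt (x := x)).isSymmSndFDerivAt
    (by rw [minSmoothness_of_isRCLikeNormedField]; exact WithTop.coe_le_coe.2 le_top)
  exact h u v


theorem pullbackThetaL_eq' (f : E → M) (x u : E) :
    pullbackThetaL f x u = (f x)⁻¹ * fderiv ℝ f x u := rfl

set_option maxHeartbeats 4000000

/-- Polyakov–Wiegmann identity: for a Lie group `G ⊆ GL(n,ℝ)`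
with Ad-invariant symmetric pairing `B = ⟨·,·⟩` and smooth `f₁ f₂ : M → G`,
writing `f = f₁ f₂` pointwise, one has
`f*η = f₁*η + f₂*η + d⟨f₁*θ_l ∧ f₂*θ_r⟩`, where the exterior derivative of
the 2-form `c = ⟨f₁*θ_l ∧ f₂*θ_r⟩` is evaluated on constant vector fields
`u v w` via `(dc)_x(u,v,w) = ∂_u c(v,w) − ∂_v c(u,w) + ∂_w c(u,v)`. -/
theorem polyakov_wiegmann
    (G : Subgroup (Matrix (Fin n) (Fin n) ℝ)ˣ)
    (B : Matrix (Fin n) (Fin n) ℝ →ₗ[ℝ] Matrix (Fin n) (Fin n) ℝ →ₗ[ℝ] ℝ)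
    (hBsymm : ∀ a b, B a b = B b a)
    (hBinv : ∀ g ∈ G, ∀ a b,
      B ((g : Matrix (Fin n) (Fin n) ℝ) * a * ((g⁻¹ : (Matrix (Fin n) (Fin n) ℝ)ˣ) : Matrix (Fin n) (Fin n) ℝ))
        ((g : Matrix (Fin n) (Fin n) ℝ) * b * ((g⁻¹ : (Matrix (Fin n) (Fin n) ℝ)ˣ) : Matrix (Fin n) (Fin n) ℝ)) = B a b)
    (f₁ f₂ : E → Matrix (Fin n) (Fin n) ℝ)
    (hf₁ : ContDiff ℝ (⊤ : ℕ∞) f₁) (hf₂ : ContDiff ℝ (⊤ : ℕ∞) f₂)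
    (hf₁G : ∀ x, ∃ g ∈ G, f₁ x = (g : Matrix (Fin n) (Fin n) ℝ))
    (hf₂G : ∀ x, ∃ g ∈ G, f₂ x = (g : Matrix (Fin n) (Fin n) ℝ)) :
    ∀ x u v w : E,
      pullbackEta B (fun y => f₁ y * f₂ y) x u v w =
        pullbackEta B f₁ x u v w + pullbackEta B f₂ x u v w +
          (fderiv ℝ (fun y => wedgePairing B f₁ f₂ y v w) x u -
            fderiv ℝ (fun y => wedgePairing B f₁ f₂ y u w) x v +
            fderiv ℝ (fun y => wedgePairing B f₁ f₂ y u v) x w) := by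
  intro x u v w
  have hu₁ : ∀ y, IsUnit ((f₁ y).det) := fun y => by
    obtain ⟨g, _, hg⟩ := hf₁G y
    exact (Matrix.isUnit_iff_isUnit_det _).1 (hg ▸ ⟨g, rfl⟩)
  have hu₂ : ∀ y, IsUnit ((f₂ y).det) := fun y => by
    obtain ⟨g, _, hg⟩ := hf₂G y
    exact (Matrix.isUnit_iff_isUnit_det _).1 (hg ▸ ⟨g, rfl⟩)
  have hQP₁ : (f₁ x)⁻¹ * f₁ x = 1 := Matrix.nonsing_inv_mul _ (hu₁ x)
  have hPQ₁ : f₁ x * (f₁ x)⁻¹ = 1 := Matrix.mul_nonsing_inv _ (hu₁ x)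
  have hQP₂ : (f₂ x)⁻¹ * f₂ x = 1 := Matrix.nonsing_inv_mul _ (hu₂ x)
  have hPQ₂ : f₂ x * (f₂ x)⁻¹ = 1 := Matrix.mul_nonsing_inv _ (hu₂ x)
  have hc₁ : ∀ m : M, (f₁ x)⁻¹ * (f₁ x * m) = m := fun m => by
    rw [← mul_assoc, hQP₁, one_mul]
  have hc₂ : ∀ m : M, f₁ x * ((f₁ x)⁻¹ * m) = m := fun m => by
    rw [← mul_assoc, hPQ₁, one_mul]
  have hc₃ : ∀ m : M, (f₂ x)⁻¹ * (f₂ x * m) = m := fun m => by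
    rw [← mul_assoc, hQP₂, one_mul]
  have hc₄ : ∀ m : M, f₂ x * ((f₂ x)⁻¹ * m) = m := fun m => by
    rw [← mul_assoc, hPQ₂, one_mul]
  have Hf₁ : HasFDerivAt f₁ (fderiv ℝ f₁ x) x :=
    ((hf₁.differentiable (by simp)) x).hasFDerivAt
  have Hf₂ : HasFDerivAt f₂ (fderiv ℝ f₂ x) x :=
    ((hf₂.differentiable (by simp)) x).hasFDerivAt
  have Hinv₁ := hasFDerivAt_matrix_inv Hf₁ hu₁
  have Hinv₂ := hasFDerivAt_matrix_inv Hf₂ hu₂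
  have HD₁ : ∀ p : E, HasFDerivAt (fun y => fderiv ℝ f₁ y p)
      ((ContinuousLinearMap.apply ℝ M p).comp (fderiv ℝ (fderiv ℝ f₁) x)) x :=
    hasFDerivAt_fderiv_apply hf₁ x
  have HD₂ : ∀ p : E, HasFDerivAt (fun y => fderiv ℝ f₂ y p)
      ((ContinuousLinearMap.apply ℝ M p).comp (fderiv ℝ (fderiv ℝ f₂) x)) x :=
    hasFDerivAt_fderiv_apply hf₂ x
  have HL := fun p : E => Hinv₁.matmul (HD₁ p)
  have HR := fun p : E => (HD₂ p).matmul Hinv₂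
  have HW := fun p q : E =>
    (hasFDerivAt_bilin (bCLM B) (HL q) (HR p)).sub (hasFDerivAt_bilin (bCLM B) (HL p) (HR q))
  have HWf : ∀ p q : E, HasFDerivAt (fun y => wedgePairing B f₁ f₂ y p q) _ x := fun p q => HW p q
  rw [(HWf v w).fderiv, (HWf u w).fderiv, (HWf u v).fderiv]
  have hprod := (Hf₁.matmul Hf₂).fderiv
  simp only [pullbackEta, pullbackThetaL_eq', hprod]
  simp only [ContinuousLinearMap.add_apply, ContinuousLinearMap.comp_apply,
    ContinuousLinearMap.flip_apply, ContinuousLinearMap.sub_apply,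
    ContinuousLinearMap.neg_apply, mulCLM_apply, bCLM_apply,
    ContinuousLinearMap.apply_apply, Matrix.mul_inv_rev]
  -- Schwarz symmetry of second derivatives
  rw [snd_symm hf₁ x v u, snd_symm hf₁ x w u, snd_symm hf₁ x w v,
      snd_symm hf₂ x v u, snd_symm hf₂ x w u, snd_symm hf₂ x w v]
  -- conjugation lemmas
  obtain ⟨g₂, hg₂G, hg₂x⟩ := hf₂G x
  have hconjB : ∀ m k : M,
      B ((f₂ x)⁻¹ * (m * f₂ x)) ((f₂ x)⁻¹ * (k * f₂ x)) = B m k := by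
    intro m k
    have h := hBinv g₂⁻¹ (G.inv_mem hg₂G) m k
    simp only [inv_inv] at h
    rw [Matrix.coe_units_inv] at h
    rw [← hg₂x] at h
    simpa only [mul_assoc] using h
  have hθ : ∀ m k : M, (f₂ x)⁻¹ * (f₁ x)⁻¹ * (m * f₂ x + f₁ x * k) =
      (f₂ x)⁻¹ * (((f₁ x)⁻¹ * m + k * (f₂ x)⁻¹) * f₂ x) := by
    intro m k
    simp only [mul_add, add_mul, mul_assoc, hc₁, hc₃, hQP₂, hPQ₂, mul_one, one_mul]
  have hmulconj : ∀ m k : M, ((f₂ x)⁻¹ * (m * f₂ x)) * ((f₂ x)⁻¹ * (k * f₂ x)) =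
      (f₂ x)⁻¹ * ((m * k) * f₂ x) := by
    intro m k
    simp only [mul_assoc, hc₄]
  have hsubconj : ∀ m k : M, (f₂ x)⁻¹ * (m * f₂ x) - (f₂ x)⁻¹ * (k * f₂ x) =
      (f₂ x)⁻¹ * ((m - k) * f₂ x) := by
    intro m k
    noncomm_ring
  have hf2l : ∀ m : M, (f₂ x)⁻¹ * m = (f₂ x)⁻¹ * ((m * (f₂ x)⁻¹) * f₂ x) := by
    intro m
    simp only [mul_assoc, hQP₂, mul_one]
  rw [hθ, hθ, hθ, hmulconj, hmulconj, hsubconj, hconjB]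
  rw [hf2l ((fderiv ℝ f₂ x) u), hf2l ((fderiv ℝ f₂ x) v), hf2l ((fderiv ℝ f₂ x) w),
      hmulconj, hmulconj, hsubconj, hconjB]
  -- infinitesimal Ad-invariance from differentiating global invariance
  have hconstL : ∀ m k : M,
      (fun y => B ((f₁ y)⁻¹ * m * f₁ y) ((f₁ y)⁻¹ * k * f₁ y)) = fun _ => B m k := by
    intro m k; funext y
    obtain ⟨g, hgG, hgy⟩ := hf₁G y
    have h := hBinv g⁻¹ (G.inv_mem hgG) m k
    simp only [inv_inv] at h
    rw [Matrix.coe_units_inv] at h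
    rw [← hgy] at h
    exact h
  have hconstR : ∀ m k : M,
      (fun y => B (f₂ y * m * (f₂ y)⁻¹) (f₂ y * k * (f₂ y)⁻¹)) = fun _ => B m k := by
    intro m k; funext y
    obtain ⟨g, hgG, hgy⟩ := hf₂G y
    have h := hBinv g hgG m k
    rw [Matrix.coe_units_inv] at h
    rw [← hgy] at h
    exact h
  have invGen₁ : ∀ (d : E) (p q : M),
      B (p * ((f₁ x)⁻¹ * (fderiv ℝ f₁ x) d)) q
        - B ((f₁ x)⁻¹ * ((fderiv ℝ f₁ x) d * p)) q
        + B p (q * ((f₁ x)⁻¹ * (fderiv ℝ f₁ x) d))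
        - B p ((f₁ x)⁻¹ * ((fderiv ℝ f₁ x) d * q)) = 0 := by
    intro d p q
    have HB := hasFDerivAt_bilin (bCLM B)
      ((Hinv₁.matmul (hasFDerivAt_const (f₁ x * (p * (f₁ x)⁻¹)) x)).matmul Hf₁)
      ((Hinv₁.matmul (hasFDerivAt_const (f₁ x * (q * (f₁ x)⁻¹)) x)).matmul Hf₁)
    have hfn : (fun y => (bCLM B) ((f₁ y)⁻¹ * (f₁ x * (p * (f₁ x)⁻¹)) * f₁ y)
        ((f₁ y)⁻¹ * (f₁ x * (q * (f₁ x)⁻¹)) * f₁ y))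
        = fun _ => B (f₁ x * (p * (f₁ x)⁻¹)) (f₁ x * (q * (f₁ x)⁻¹)) := by
      have := hconstL (f₁ x * (p * (f₁ x)⁻¹)) (f₁ x * (q * (f₁ x)⁻¹))
      exact this
    rw [hfn] at HB
    have h0 := HB.unique (hasFDerivAt_const _ _)
    have h0d := congrArg (fun L => L d) h0
    simp only [ContinuousLinearMap.add_apply, ContinuousLinearMap.comp_apply,
      ContinuousLinearMap.flip_apply, ContinuousLinearMap.neg_apply,
      ContinuousLinearMap.zero_apply, ContinuousLinearMap.comp_zero,
      ContinuousLinearMap.zero_comp, ContinuousLinearMap.coe_zero, Pi.zero_apply,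
      mulCLM_apply, bCLM_apply] at h0d
    simp only [mul_assoc, hc₁, hc₂, hQP₁, hPQ₁, mul_one, one_mul, neg_mul, mul_neg,
      map_neg, map_add, LinearMap.add_apply, LinearMap.neg_apply, neg_neg, add_zero, zero_add] at h0d
    linarith [h0d]
  have invGen₂ : ∀ (d : E) (p q : M),
      B (p * ((fderiv ℝ f₂ x) d * (f₂ x)⁻¹)) q
        - B ((fderiv ℝ f₂ x) d * ((f₂ x)⁻¹ * p)) q
        + B p (q * ((fderiv ℝ f₂ x) d * (f₂ x)⁻¹))
        - B p ((fderiv ℝ f₂ x) d * ((f₂ x)⁻¹ * q)) = 0 := by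
    intro d p q
    have HB := hasFDerivAt_bilin (bCLM B)
      ((Hf₂.matmul (hasFDerivAt_const ((f₂ x)⁻¹ * (p * f₂ x)) x)).matmul Hinv₂)
      ((Hf₂.matmul (hasFDerivAt_const ((f₂ x)⁻¹ * (q * f₂ x)) x)).matmul Hinv₂)
    have hfn : (fun y => (bCLM B) (f₂ y * ((f₂ x)⁻¹ * (p * f₂ x)) * (f₂ y)⁻¹)
        (f₂ y * ((f₂ x)⁻¹ * (q * f₂ x)) * (f₂ y)⁻¹))
        = fun _ => B ((f₂ x)⁻¹ * (p * f₂ x)) ((f₂ x)⁻¹ * (q * f₂ x)) := by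
      exact hconstR ((f₂ x)⁻¹ * (p * f₂ x)) ((f₂ x)⁻¹ * (q * f₂ x))
    rw [hfn] at HB
    have h0 := HB.unique (hasFDerivAt_const _ _)
    have h0d := congrArg (fun L => L d) h0
    simp only [ContinuousLinearMap.add_apply, ContinuousLinearMap.comp_apply,
      ContinuousLinearMap.flip_apply, ContinuousLinearMap.neg_apply,
      ContinuousLinearMap.zero_apply, ContinuousLinearMap.comp_zero,
      ContinuousLinearMap.zero_comp, ContinuousLinearMap.coe_zero, Pi.zero_apply,
      mulCLM_apply, bCLM_apply] at h0d
    simp only [mul_assoc, hc₃, hc₄, hQP₂, hPQ₂, mul_one, one_mul, neg_mul, mul_neg,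
      map_neg, map_add, LinearMap.add_apply, LinearMap.neg_apply, neg_neg, add_zero, zero_add] at h0d
    linarith [h0d]
  have I0 : B ((f₁ x)⁻¹ * ((fderiv ℝ f₁ x) u * ((f₁ x)⁻¹ * ((fderiv ℝ f₁ x) v)))) ((fderiv ℝ f₂ x) w * ((f₂ x)⁻¹)) - B ((f₁ x)⁻¹ * ((fderiv ℝ f₁ x) v * ((f₁ x)⁻¹ * ((fderiv ℝ f₁ x) u)))) ((fderiv ℝ f₂ x) w * ((f₂ x)⁻¹)) + B ((f₁ x)⁻¹ * ((fderiv ℝ f₁ x) u)) ((fderiv ℝ f₂ x) w * ((f₂ x)⁻¹ * ((f₁ x)⁻¹ * ((fderiv ℝ f₁ x) v)))) - B ((f₁ x)⁻¹ * ((fderiv ℝ f₁ x) u)) ((f₁ x)⁻¹ * ((fderiv ℝ f₁ x) v * ((fderiv ℝ f₂ x) w * ((f₂ x)⁻¹)))) = 0 := by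
    have h := invGen₁ v ((f₁ x)⁻¹ * ((fderiv ℝ f₁ x) u)) ((fderiv ℝ f₂ x) w * ((f₂ x)⁻¹))
    simp only [mul_assoc] at h
    linarith
  have I1 : B ((fderiv ℝ f₂ x) u * ((f₂ x)⁻¹ * ((f₁ x)⁻¹ * ((fderiv ℝ f₁ x) v)))) ((f₁ x)⁻¹ * ((fderiv ℝ f₁ x) w)) - B ((f₁ x)⁻¹ * ((fderiv ℝ f₁ x) v * ((fderiv ℝ f₂ x) u * ((f₂ x)⁻¹)))) ((f₁ x)⁻¹ * ((fderiv ℝ f₁ x) w)) + B ((fderiv ℝ f₂ x) u * ((f₂ x)⁻¹)) ((f₁ x)⁻¹ * ((fderiv ℝ f₁ x) w * ((f₁ x)⁻¹ * ((fderiv ℝ f₁ x) v)))) - B ((fderiv ℝ f₂ x) u * ((f₂ x)⁻¹)) ((f₁ x)⁻¹ * ((fderiv ℝ f₁ x) v * ((f₁ x)⁻¹ * ((fderiv ℝ f₁ x) w)))) = 0 := by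
    have h := invGen₁ v ((fderiv ℝ f₂ x) u * ((f₂ x)⁻¹)) ((f₁ x)⁻¹ * ((fderiv ℝ f₁ x) w))
    simp only [mul_assoc] at h
    linarith
  have I2 : B ((fderiv ℝ f₂ x) u * ((f₂ x)⁻¹ * ((f₁ x)⁻¹ * ((fderiv ℝ f₁ x) v)))) ((fderiv ℝ f₂ x) w * ((f₂ x)⁻¹)) - B ((f₁ x)⁻¹ * ((fderiv ℝ f₁ x) v * ((fderiv ℝ f₂ x) u * ((f₂ x)⁻¹)))) ((fderiv ℝ f₂ x) w * ((f₂ x)⁻¹)) + B ((fderiv ℝ f₂ x) u * ((f₂ x)⁻¹)) ((fderiv ℝ f₂ x) w * ((f₂ x)⁻¹ * ((f₁ x)⁻¹ * ((fderiv ℝ f₁ x) v)))) - B ((fderiv ℝ f₂ x) u * ((f₂ x)⁻¹)) ((f₁ x)⁻¹ * ((fderiv ℝ f₁ x) v * ((fderiv ℝ f₂ x) w * ((f₂ x)⁻¹)))) = 0 := by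
    have h := invGen₁ v ((fderiv ℝ f₂ x) u * ((f₂ x)⁻¹)) ((fderiv ℝ f₂ x) w * ((f₂ x)⁻¹))
    simp only [mul_assoc] at h
    linarith
  have I3 : B ((f₁ x)⁻¹ * ((fderiv ℝ f₁ x) u * ((f₁ x)⁻¹ * ((fderiv ℝ f₁ x) w)))) ((fderiv ℝ f₂ x) v * ((f₂ x)⁻¹)) - B ((f₁ x)⁻¹ * ((fderiv ℝ f₁ x) w * ((f₁ x)⁻¹ * ((fderiv ℝ f₁ x) u)))) ((fderiv ℝ f₂ x) v * ((f₂ x)⁻¹)) + B ((f₁ x)⁻¹ * ((fderiv ℝ f₁ x) u)) ((fderiv ℝ f₂ x) v * ((f₂ x)⁻¹ * ((f₁ x)⁻¹ * ((fderiv ℝ f₁ x) w)))) - B ((f₁ x)⁻¹ * ((fderiv ℝ f₁ x) u)) ((f₁ x)⁻¹ * ((fderiv ℝ f₁ x) w * ((fderiv ℝ f₂ x) v * ((f₂ x)⁻¹)))) = 0 := by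
    have h := invGen₁ w ((f₁ x)⁻¹ * ((fderiv ℝ f₁ x) u)) ((fderiv ℝ f₂ x) v * ((f₂ x)⁻¹))
    simp only [mul_assoc] at h
    linarith
  have I4 : B ((f₁ x)⁻¹ * ((fderiv ℝ f₁ x) v * ((f₁ x)⁻¹ * ((fderiv ℝ f₁ x) w)))) ((fderiv ℝ f₂ x) u * ((f₂ x)⁻¹)) - B ((f₁ x)⁻¹ * ((fderiv ℝ f₁ x) w * ((f₁ x)⁻¹ * ((fderiv ℝ f₁ x) v)))) ((fderiv ℝ f₂ x) u * ((f₂ x)⁻¹)) + B ((f₁ x)⁻¹ * ((fderiv ℝ f₁ x) v)) ((fderiv ℝ f₂ x) u * ((f₂ x)⁻¹ * ((f₁ x)⁻¹ * ((fderiv ℝ f₁ x) w)))) - B ((f₁ x)⁻¹ * ((fderiv ℝ f₁ x) v)) ((f₁ x)⁻¹ * ((fderiv ℝ f₁ x) w * ((fderiv ℝ f₂ x) u * ((f₂ x)⁻¹)))) = 0 := by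
    have h := invGen₁ w ((f₁ x)⁻¹ * ((fderiv ℝ f₁ x) v)) ((fderiv ℝ f₂ x) u * ((f₂ x)⁻¹))
    simp only [mul_assoc] at h
    linarith
  have I5 : B ((fderiv ℝ f₂ x) u * ((f₂ x)⁻¹ * ((f₁ x)⁻¹ * ((fderiv ℝ f₁ x) w)))) ((fderiv ℝ f₂ x) v * ((f₂ x)⁻¹)) - B ((f₁ x)⁻¹ * ((fderiv ℝ f₁ x) w * ((fderiv ℝ f₂ x) u * ((f₂ x)⁻¹)))) ((fderiv ℝ f₂ x) v * ((f₂ x)⁻¹)) + B ((fderiv ℝ f₂ x) u * ((f₂ x)⁻¹)) ((fderiv ℝ f₂ x) v * ((f₂ x)⁻¹ * ((f₁ x)⁻¹ * ((fderiv ℝ f₁ x) w)))) - B ((fderiv ℝ f₂ x) u * ((f₂ x)⁻¹)) ((f₁ x)⁻¹ * ((fderiv ℝ f₁ x) w * ((fderiv ℝ f₂ x) v * ((f₂ x)⁻¹)))) = 0 := by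
    have h := invGen₁ w ((fderiv ℝ f₂ x) u * ((f₂ x)⁻¹)) ((fderiv ℝ f₂ x) v * ((f₂ x)⁻¹))
    simp only [mul_assoc] at h
    linarith
  have I6 : B ((f₁ x)⁻¹ * ((fderiv ℝ f₁ x) v * ((fderiv ℝ f₂ x) u * ((f₂ x)⁻¹)))) ((f₁ x)⁻¹ * ((fderiv ℝ f₁ x) w)) - B ((fderiv ℝ f₂ x) u * ((f₂ x)⁻¹ * ((f₁ x)⁻¹ * ((fderiv ℝ f₁ x) v)))) ((f₁ x)⁻¹ * ((fderiv ℝ f₁ x) w)) + B ((f₁ x)⁻¹ * ((fderiv ℝ f₁ x) v)) ((f₁ x)⁻¹ * ((fderiv ℝ f₁ x) w * ((fderiv ℝ f₂ x) u * ((f₂ x)⁻¹)))) - B ((f₁ x)⁻¹ * ((fderiv ℝ f₁ x) v)) ((fderiv ℝ f₂ x) u * ((f₂ x)⁻¹ * ((f₁ x)⁻¹ * ((fderiv ℝ f₁ x) w)))) = 0 := by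
    have h := invGen₂ u ((f₁ x)⁻¹ * ((fderiv ℝ f₁ x) v)) ((f₁ x)⁻¹ * ((fderiv ℝ f₁ x) w))
    simp only [mul_assoc] at h
    linarith
  have I7 : B ((f₁ x)⁻¹ * ((fderiv ℝ f₁ x) v * ((fderiv ℝ f₂ x) u * ((f₂ x)⁻¹)))) ((fderiv ℝ f₂ x) w * ((f₂ x)⁻¹)) - B ((fderiv ℝ f₂ x) u * ((f₂ x)⁻¹ * ((f₁ x)⁻¹ * ((fderiv ℝ f₁ x) v)))) ((fderiv ℝ f₂ x) w * ((f₂ x)⁻¹)) + B ((f₁ x)⁻¹ * ((fderiv ℝ f₁ x) v)) ((fderiv ℝ f₂ x) w * ((f₂ x)⁻¹ * ((fderiv ℝ f₂ x) u * ((f₂ x)⁻¹)))) - B ((f₁ x)⁻¹ * ((fderiv ℝ f₁ x) v)) ((fderiv ℝ f₂ x) u * ((f₂ x)⁻¹ * ((fderiv ℝ f₂ x) w * ((f₂ x)⁻¹)))) = 0 := by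
    have h := invGen₂ u ((f₁ x)⁻¹ * ((fderiv ℝ f₁ x) v)) ((fderiv ℝ f₂ x) w * ((f₂ x)⁻¹))
    simp only [mul_assoc] at h
    linarith
  have I8 : B ((f₁ x)⁻¹ * ((fderiv ℝ f₁ x) w * ((fderiv ℝ f₂ x) u * ((f₂ x)⁻¹)))) ((fderiv ℝ f₂ x) v * ((f₂ x)⁻¹)) - B ((fderiv ℝ f₂ x) u * ((f₂ x)⁻¹ * ((f₁ x)⁻¹ * ((fderiv ℝ f₁ x) w)))) ((fderiv ℝ f₂ x) v * ((f₂ x)⁻¹)) + B ((f₁ x)⁻¹ * ((fderiv ℝ f₁ x) w)) ((fderiv ℝ f₂ x) v * ((f₂ x)⁻¹ * ((fderiv ℝ f₂ x) u * ((f₂ x)⁻¹)))) - B ((f₁ x)⁻¹ * ((fderiv ℝ f₁ x) w)) ((fderiv ℝ f₂ x) u * ((f₂ x)⁻¹ * ((fderiv ℝ f₂ x) v * ((f₂ x)⁻¹)))) = 0 := by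
    have h := invGen₂ u ((f₁ x)⁻¹ * ((fderiv ℝ f₁ x) w)) ((fderiv ℝ f₂ x) v * ((f₂ x)⁻¹))
    simp only [mul_assoc] at h
    linarith
  simp only [map_add, map_sub, map_neg, LinearMap.add_apply, LinearMap.sub_apply,
    LinearMap.neg_apply, mul_add, add_mul, mul_sub, sub_mul, neg_mul, mul_neg, neg_neg,
    mul_assoc]
  linear_combination - I0 - I1 - I2 + I3 - I4 + I5 - I6 - I7 + I8

end
end
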